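/- Let G = ([n],[B],E) be a left-d_L-regular (K,ε)-lossless bipartite expander. For X ⊆ [n] with |X| ≤ K and i ∈ X, let u_i = |{b ∈ U(X) : (i,b) ∈ E}|. Then for any θ ∈ [0,1), at least a (1 − 2ε/(1−θ))-fraction of the vertices i ∈ X satisfy u_i ≥ θ·d_L. -/
import Mathlib


open Finset

/-- The neighborhood `N(X)` of a set `X` of left vertices in the bipartite graph with
edge set `E ⊆ [n] × [B]`. -/
def nbhd {n B : ℕ} (E : Finset (Fin n × Fin B)) (X : Finset (Fin n)) : Finset (Fin B) :=
  Finset.univ.filter (fun b : Fin B => ∃ i ∈ X, (i, b) ∈ E)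

/-- `u_b(X)`: the number of neighbors of the right vertex `b` inside `X`. -/
def multb {n B : ℕ} (E : Finset (Fin n × Fin B)) (X : Finset (Fin n)) (b : Fin B) : ℕ :=
  (X.filter (fun i => (i, b) ∈ E)).card

/-- `U(X)`: the set of unique neighbors of `X`, i.e. right vertices with exactly one
neighbor in `X`. -/
def uniqNbrs {n B : ℕ} (E : Finset (Fin n × Fin B)) (X : Finset (Fin n)) : Finset (Fin B) :=
  Finset.univ.filter (fun b : Fin B => multb E X b = 1)

/-- The graph is left-`dL`-regular: every left vertex has exactly `dL` neighbors. -/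
def LeftRegular {n B : ℕ} (E : Finset (Fin n × Fin B)) (dL : ℕ) : Prop :=
  ∀ i : Fin n, (Finset.univ.filter (fun b : Fin B => (i, b) ∈ E)).card = dL

/-- The graph is a `(K, ε)`-lossless expander: every `X` with `|X| ≤ K` satisfies
`|N(X)| ≥ (1 - ε) · dL · |X|`. -/
def Lossless {n B : ℕ} (E : Finset (Fin n × Fin B)) (dL K : ℕ) (ε : ℝ) : Prop :=
  ∀ X : Finset (Fin n), X.card ≤ K → ((nbhd E X).card : ℝ) ≥ (1 - ε) * dL * X.card


attribute [local instance] Classical.propDecidable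

/-- `u_i`: the number of unique neighbors (buckets in `U(X)`) adjacent to the left vertex `i`. -/
def uVert {n B : ℕ} (E : Finset (Fin n × Fin B)) (X : Finset (Fin n)) (i : Fin n) : ℕ :=
  ((uniqNbrs E X).filter (fun b => (i, b) ∈ E)).card

lemma sum_multb {n B dL : ℕ} (E : Finset (Fin n × Fin B)) (hreg : LeftRegular E dL)
    (X : Finset (Fin n)) : ∑ b : Fin B, multb E X b = dL * X.card := by
  unfold multb
  simp_rw [Finset.card_filter]
  rw [Finset.sum_comm]
  have h : ∀ i ∈ X, (∑ b : Fin B, if (i, b) ∈ E then 1 else 0) = dL := by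
    intro i _
    rw [← Finset.card_filter]
    exact hreg i
  rw [Finset.sum_congr rfl h, Finset.sum_const, smul_eq_mul, mul_comm]

lemma sum_uVert {n B : ℕ} (E : Finset (Fin n × Fin B)) (X : Finset (Fin n)) :
    ∑ i ∈ X, uVert E X i = (uniqNbrs E X).card := by
  unfold uVert
  simp_rw [Finset.card_filter]
  rw [Finset.sum_comm]
  have h : ∀ b ∈ uniqNbrs E X, (∑ i ∈ X, if (i, b) ∈ E then 1 else 0) = 1 := by
    intro b hb
    rw [← Finset.card_filter]
    simpa [uniqNbrs, multb] using (Finset.mem_filter.mp hb).2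
  rw [Finset.sum_congr rfl h, Finset.sum_const, smul_eq_mul, mul_one]

lemma uniq_sub_nbhd {n B : ℕ} (E : Finset (Fin n × Fin B)) (X : Finset (Fin n)) :
    uniqNbrs E X ⊆ nbhd E X := by
  intro b hb
  have h1 : multb E X b = 1 := (Finset.mem_filter.mp hb).2
  have h1' : (X.filter (fun i => (i, b) ∈ E)).card = 1 := h1
  have : (X.filter (fun i => (i, b) ∈ E)).Nonempty := by
    rw [← Finset.card_pos, h1']; norm_num
  obtain ⟨i, hi⟩ := this
  simp only [nbhd, Finset.mem_filter, Finset.mem_univ, true_and]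
  exact ⟨i, (Finset.mem_filter.mp hi).1, (Finset.mem_filter.mp hi).2⟩

lemma uniq_card_bound {n B dL : ℕ} (E : Finset (Fin n × Fin B)) (hreg : LeftRegular E dL)
    (X : Finset (Fin n)) :
    2 * (nbhd E X).card ≤ (uniqNbrs E X).card + dL * X.card := by
  have hUN := uniq_sub_nbhd E X
  have htot : ∑ b ∈ nbhd E X, multb E X b ≤ dL * X.card := by
    rw [← sum_multb E hreg X]
    exact Finset.sum_le_sum_of_subset (Finset.subset_univ _)
  have hsplit : ∑ b ∈ (nbhd E X) \ (uniqNbrs E X), multb E X b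
      + ∑ b ∈ uniqNbrs E X, multb E X b = ∑ b ∈ nbhd E X, multb E X b :=
    Finset.sum_sdiff hUN
  have hU1 : ∑ b ∈ uniqNbrs E X, multb E X b = (uniqNbrs E X).card := by
    calc ∑ b ∈ uniqNbrs E X, multb E X b
        = ∑ _b ∈ uniqNbrs E X, 1 :=
          Finset.sum_congr rfl (fun b hb => (Finset.mem_filter.mp hb).2)
      _ = (uniqNbrs E X).card := by simp
  have hge2 : ∀ b ∈ (nbhd E X) \ (uniqNbrs E X), 2 ≤ multb E X b := by
    intro b hb
    obtain ⟨hbN, hbU⟩ := Finset.mem_sdiff.mp hb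
    have hne1 : multb E X b ≠ 1 := by
      intro h; exact hbU (Finset.mem_filter.mpr ⟨Finset.mem_univ _, h⟩)
    have hpos : 0 < multb E X b := by
      obtain ⟨i, hiX, hiE⟩ := (Finset.mem_filter.mp hbN).2
      rw [multb, Finset.card_pos]
      exact ⟨i, Finset.mem_filter.mpr ⟨hiX, hiE⟩⟩
    omega
  have hsd : 2 * ((nbhd E X) \ (uniqNbrs E X)).card
      ≤ ∑ b ∈ (nbhd E X) \ (uniqNbrs E X), multb E X b := by
    calc 2 * ((nbhd E X) \ (uniqNbrs E X)).card
        = ∑ _b ∈ (nbhd E X) \ (uniqNbrs E X), 2 := by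
          rw [Finset.sum_const, smul_eq_mul, mul_comm]
      _ ≤ _ := Finset.sum_le_sum hge2
  have hcard : ((nbhd E X) \ (uniqNbrs E X)).card + (uniqNbrs E X).card
      = (nbhd E X).card := Finset.card_sdiff_add_card_eq_card hUN
  omega

lemma uVert_le {n B dL : ℕ} (E : Finset (Fin n × Fin B)) (hreg : LeftRegular E dL)
    (X : Finset (Fin n)) (i : Fin n) : uVert E X i ≤ dL := by
  rw [← hreg i]
  apply Finset.card_le_card
  intro b hb
  exact Finset.mem_filter.mpr ⟨Finset.mem_univ _, (Finset.mem_filter.mp hb).2⟩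

/-- In a left-`dL`-regular `(K,ε)`-lossless bipartite expander, for every
`X ⊆ [n]` with `|X| ≤ K` and every `θ ∈ [0,1)`, at least a `(1 − 2ε/(1−θ))`-fraction of the
vertices `i ∈ X` satisfy `u_i ≥ θ·dL`. -/
theorem many_vertices_with_theta_unique_neighbors (n B dL K : ℕ) (ε : ℝ)
    (hdL : 0 < dL) (hK : 0 < K) (hε0 : 0 < ε) (hε1 : ε < 1)
    (E : Finset (Fin n × Fin B))
    (hreg : LeftRegular E dL) (hexp : Lossless E dL K ε) :
    ∀ X : Finset (Fin n), X.card ≤ K →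
      ∀ θ : ℝ, 0 ≤ θ → θ < 1 →
        (((X.filter (fun i => θ * dL ≤ (uVert E X i : ℝ))).card : ℝ))
          ≥ (1 - 2 * ε / (1 - θ)) * X.card := by
  intro X hX θ hθ0 hθ1
  have hθ' : (0 : ℝ) < 1 - θ := by linarith
  have hdLR : (0 : ℝ) < dL := by exact_mod_cast hdL
  set p : Fin n → Prop := fun i => θ * dL ≤ (uVert E X i : ℝ) with hp
  -- unique neighbor count lower bound
  have h2 : (2 : ℝ) * (nbhd E X).card ≤ (uniqNbrs E X).card + dL * X.card := by
    exact_mod_cast uniq_card_bound E hreg X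
  have hN := hexp X hX
  have hU : ((uniqNbrs E X).card : ℝ) ≥ (1 - 2 * ε) * dL * X.card := by nlinarith
  -- sum of uVert over X
  have hsum : (∑ i ∈ X, (uVert E X i : ℝ)) = (uniqNbrs E X).card := by
    exact_mod_cast sum_uVert E X
  have hsplit : (∑ i ∈ X.filter p, (uVert E X i : ℝ))
      + ∑ i ∈ X.filter (fun i => ¬ p i), (uVert E X i : ℝ)
      = ∑ i ∈ X, (uVert E X i : ℝ) :=
    Finset.sum_filter_add_sum_filter_not X p _
  have hgood : (∑ i ∈ X.filter p, (uVert E X i : ℝ)) ≤ dL * (X.filter p).card := by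
    calc (∑ i ∈ X.filter p, (uVert E X i : ℝ))
        ≤ ∑ _i ∈ X.filter p, (dL : ℝ) := by
          apply Finset.sum_le_sum
          intro i _
          exact_mod_cast uVert_le E hreg X i
      _ = dL * (X.filter p).card := by rw [Finset.sum_const, nsmul_eq_mul, mul_comm]
  have hbad : (∑ i ∈ X.filter (fun i => ¬ p i), (uVert E X i : ℝ))
      ≤ θ * dL * (X.filter (fun i => ¬ p i)).card := by
    calc (∑ i ∈ X.filter (fun i => ¬ p i), (uVert E X i : ℝ))
        ≤ ∑ _i ∈ X.filter (fun i => ¬ p i), θ * dL := by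
          apply Finset.sum_le_sum
          intro i hi
          have := (Finset.mem_filter.mp hi).2
          simp only [hp] at this
          linarith [lt_of_not_ge this]
      _ = θ * dL * (X.filter (fun i => ¬ p i)).card := by
          rw [Finset.sum_const, nsmul_eq_mul, mul_comm]
  have hcards : ((X.filter p).card : ℝ) + ((X.filter (fun i => ¬ p i)).card : ℝ)
      = X.card := by exact_mod_cast Finset.card_filter_add_card_filter_not (p := p)
  set a : ℝ := ((X.filter p).card : ℝ)
  set t : ℝ := ((X.filter (fun i => ¬ p i)).card : ℝ)
  set x : ℝ := (X.card : ℝ)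
  have hchain : (1 - 2 * ε) * dL * x ≤ dL * a + θ * dL * t := by linarith
  have h3 : (1 - 2 * ε) * x ≤ a + θ * t := by
    by_contra hcon
    push_neg at hcon
    nlinarith
  have key : ((1 - θ) - 2 * ε) * x ≤ (1 - θ) * a := by nlinarith
  have hrw : (1 - 2 * ε / (1 - θ)) = ((1 - θ) - 2 * ε) / (1 - θ) := by
    field_simp
  rw [ge_iff_le, hrw, div_mul_eq_mul_div, div_le_iff₀ hθ']
  nlinarith
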